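/- arXiv:2207.10251 — 7 statements merged into one kernel-verified Lean document; each statement's English description precedes it below -/
import Mathlib

section
/- Let k, n be positive integers, let a be the largest divisor of n that is coprime to k, and let b = n/a. Then a positive integer j is a multiple of gcd(jk, n) if and only if j is a multiple of b. -/
/-!
Write `n = a * b` with `b = n / a`. Maximality of `a` forces every prime factor of `b` to divide
`k` (otherwise `a * p` would be a larger divisor of `n` coprime to `k`), so `b ∣ k ^ m` for some
`m` and `a` is coprime to `b`. If `b ∣ j`, then `gcd (j * k) (a * b) = gcd j a * gcd (j * k) b`
divides `gcd j a * b`, which divides `j`. Conversely, `gcd (x * k) n` only depends on `gcd x n`,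
so `gcd (j * k) n ∣ j` propagates to `gcd (j * k ^ m) n ∣ j`, and `b` divides the latter gcd.
-/

namespace Nat

theorem gcd_mul_right_eq_gcd_gcd_mul (x k n : ℕ) : gcd (x * k) n = gcd (gcd x n * k) n := by
  rw [← Nat.gcd_mul_right, Nat.gcd_assoc, Nat.gcd_mul_right_left]

theorem gcd_mul_pow_dvd_of_gcd_mul_dvd {j k n : ℕ} (h : gcd (j * k) n ∣ j) :
    ∀ m, gcd (j * k ^ m) n ∣ j
  | 0 => by simpa using Nat.gcd_dvd_left j n
  | m + 1 =>
    calc gcd (j * k ^ (m + 1)) n = gcd (gcd (j * k ^ m) n * k) n := by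
          rw [pow_succ, ← mul_assoc, gcd_mul_right_eq_gcd_gcd_mul]
      _ ∣ gcd (j * k) n := Nat.gcd_dvd_gcd_of_dvd_left n
          (Nat.mul_dvd_mul_right (gcd_mul_pow_dvd_of_gcd_mul_dvd h m) k)
      _ ∣ j := h

theorem gcd_mul_dvd_self_iff_dvd {a b k j m : ℕ} (hak : a.Coprime k) (hbk : b ∣ k ^ m) :
    gcd (j * k) (a * b) ∣ j ↔ b ∣ j := by
  have hab : a.Coprime b := (hak.pow_right m).coprime_dvd_right hbk
  constructor
  · intro h
    have hb_gcd : b ∣ gcd (j * k ^ m) (a * b) :=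
      Nat.dvd_gcd (Dvd.dvd.mul_left hbk j) (Nat.dvd_mul_left b a)
    exact hb_gcd.trans (gcd_mul_pow_dvd_of_gcd_mul_dvd h m)
  · intro h
    rw [hab.gcd_mul, hak.symm.gcd_mul_right_cancel]
    have hcop : (gcd j a).Coprime (gcd (j * k) b) :=
      (hab.coprime_dvd_left (Nat.gcd_dvd_right j a)).coprime_dvd_right (Nat.gcd_dvd_right _ b)
    exact hcop.mul_dvd_of_dvd_of_dvd (Nat.gcd_dvd_left j a) ((Nat.gcd_dvd_right _ b).trans h)

theorem primeFactors_div_subset_of_maximal_coprime_dvd {n a k : ℕ} (hn : n ≠ 0) (hk : k ≠ 0)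
    (han : a ∣ n) (hak : a.Coprime k) (hmax : ∀ d, d ∣ n → d.Coprime k → d ≤ a) :
    (n / a).primeFactors ⊆ k.primeFactors := by
  intro p hp
  obtain ⟨hp, hpb, -⟩ := Nat.mem_primeFactors.1 hp
  refine Nat.mem_primeFactors.2 ⟨hp, ?_, hk⟩
  by_contra hpk
  have hle := hmax (a * p) (Nat.mul_dvd_of_dvd_div han hpb)
    (hak.mul_left (hp.coprime_iff_not_dvd.2 hpk))
  have ha : 0 < a := Nat.pos_of_dvd_of_pos han (Nat.pos_of_ne_zero hn)
  exact absurd hle (not_le.2 (lt_mul_of_one_lt_right ha hp.one_lt))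

end Nat

/-- Let a be the largest divisor of n coprime to k and b = n/a. Then a positive
integer j is a multiple of gcd(jk, n) iff j is a multiple of b. -/
theorem multiple_of_gcd_iff (k n a b : ℕ) (hk : 0 < k) (hn : 0 < n)
    (han : a ∣ n) (hak : Nat.Coprime a k)
    (hmax : ∀ d : ℕ, d ∣ n → Nat.Coprime d k → d ≤ a)
    (hb : b = n / a) :
    ∀ j : ℕ, 0 < j → (Nat.gcd (j * k) n ∣ j ↔ b ∣ j) := by
  intro j _
  subst hb
  have hb0 : n / a ≠ 0 :=
    (Nat.div_pos (Nat.le_of_dvd hn han) (Nat.pos_of_dvd_of_pos han hn)).ne'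
  have hbk : n / a ∣ k ^ (n / a) := (Nat.dvd_pow_self_iff hb0 hk.ne').2
    (Nat.primeFactors_div_subset_of_maximal_coprime_dvd hn.ne' hk.ne' han hak hmax)
  simpa only [Nat.mul_div_cancel' han] using Nat.gcd_mul_dvd_self_iff_dvd (j := j) hak hbk
end

section
/- Let ψ : (ZMod k)^n → (ZMod k)^n be defined by ψ(v) = (v₂, ..., vₙ, v₁+1), with k, n ≥ 1. The number of orbits of the cyclic group generated by ψ acting on (ZMod k)^n equals (1/(kn)) · Σ_{d ∣ a} φ(d) · k^{n/d}, where φ is Euler's totient function and a is the largest divisor of n coprime to k. -/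
/-!
Identify `v : Fin n → ZMod k` with the sequence `F j = v (j % n) + j / n`, characterised by
`F (j + n) = F j + 1`. Under this identification `ψ` becomes the shift `F ↦ F (· + 1)`, so
`ψ^[k * n] = id` and `ZMod (k * n)` acts by iterates of `ψ`; Burnside's lemma turns the orbit
count times `k * n` into a sum of fixed-point counts. An element of additive order `o` fixes
exactly the sequences of period `k * n / o`. Comparing `F (j + n t) = F j + t` with the period
shows that such sequences exist only when `o ∣ n` and `o` is coprime to `k`, i.e. when `o ∣ a`;
they are then the sequences with `F (j + n / o) = F j + o⁻¹`, and there are `k ^ (n / o)` of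
them. Finally, `ZMod (k * n)` has `φ o` elements of order `o`.
-/

/-- ψ(v) = (v₂, ..., vₙ, v₁+1) on (ZMod k)^n. -/
def psi (k n : ℕ) : (Fin n → ZMod k) → (Fin n → ZMod k) :=
  fun v j =>
    v ⟨((j : ℕ) + 1) % n, Nat.mod_lt _ j.pos⟩ + if (j : ℕ) + 1 = n then 1 else 0

open Function

section QuasiPeriodic

variable {M : Type*} [AddMonoid M]

def QuasiPeriodic (F : ℕ → M) (n : ℕ) (x : M) : Prop :=
  ∀ j, F (j + n) = F j + x

theorem QuasiPeriodic.add_mul {F : ℕ → M} {n : ℕ} {x : M} (hF : QuasiPeriodic F n x)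
    (j t : ℕ) : F (j + n * t) = F j + t • x := by
  induction t with
  | zero => simp
  | succ t ih => rw [Nat.mul_succ, ← add_assoc, hF, ih, succ_nsmul, add_assoc]

theorem QuasiPeriodic.comp_add_right {F : ℕ → M} {n : ℕ} {x : M} (hF : QuasiPeriodic F n x)
    (m : ℕ) : QuasiPeriodic (fun j => F (j + m)) n x := fun j => by
  simpa only [add_right_comm] using hF (j + m)

theorem QuasiPeriodic.periodic_mul {F : ℕ → M} {n t : ℕ} {x : M} (hF : QuasiPeriodic F n x)
    (ht : t • x = 0) : Periodic F (n * t) := fun j => by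
  rw [hF.add_mul, ht, add_zero]

def quasiPeriodicEquiv (n : ℕ) [NeZero n] (x : M) :
    (Fin n → M) ≃ {F : ℕ → M // QuasiPeriodic F n x} where
  toFun v := ⟨fun j => v (Fin.ofNat n j) + (j / n) • x, fun j => by
    have : Fin.ofNat n (j + n) = Fin.ofNat n j := Fin.ext (by simp)
    simp only [this, Nat.add_div_right _ (NeZero.pos n), succ_nsmul, add_assoc]⟩
  invFun F i := F.1 i
  left_inv v := funext fun i => by simp [Nat.div_eq_of_lt i.2]
  right_inv F := Subtype.ext <| funext fun j => by
    conv_rhs => rw [← Nat.mod_add_div j n, F.2.add_mul]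
    simp

theorem quasiPeriodicEquiv_apply_of_lt {n : ℕ} [NeZero n] (x : M) (v : Fin n → M) {j : ℕ}
    (hj : j < n) : (quasiPeriodicEquiv n x v).1 j = v ⟨j, hj⟩ := by
  simp only [quasiPeriodicEquiv, Equiv.coe_fn_mk, Nat.div_eq_of_lt hj, zero_smul, add_zero]
  exact congrArg v (Fin.ext (Nat.mod_eq_of_lt hj))

end QuasiPeriodic

section Psi

variable {k n : ℕ} [NeZero n]

theorem quasiPeriodicEquiv_psi (v : Fin n → ZMod k) (j : ℕ) :
    (quasiPeriodicEquiv n 1 (psi k n v)).1 j = (quasiPeriodicEquiv n 1 v).1 (j + 1) := by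
  set F := quasiPeriodicEquiv n 1 v
  suffices psi k n v = (quasiPeriodicEquiv n 1).symm ⟨_, F.2.comp_add_right 1⟩ by simp [this]
  funext i
  change _ = F.1 (i + 1)
  by_cases hi : (i : ℕ) + 1 = n
  · have hFn := F.2 0
    rw [zero_add] at hFn
    simp only [psi, hi, Nat.mod_self, if_true]
    rw [hFn, quasiPeriodicEquiv_apply_of_lt _ _ (NeZero.pos n)]
  · have hlt : (i : ℕ) + 1 < n := by omega
    simp only [psi, Nat.mod_eq_of_lt hlt, hi, if_false, add_zero]
    rw [quasiPeriodicEquiv_apply_of_lt _ _ hlt]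

theorem quasiPeriodicEquiv_psi_iterate (i : ℕ) (v : Fin n → ZMod k) (j : ℕ) :
    (quasiPeriodicEquiv n 1 ((psi k n)^[i] v)).1 j = (quasiPeriodicEquiv n 1 v).1 (j + i) := by
  induction i generalizing v with
  | zero => rfl
  | succ i ih => rw [iterate_succ_apply, ih, quasiPeriodicEquiv_psi, add_assoc]

theorem isPeriodicPt_psi_iff {i : ℕ} {v : Fin n → ZMod k} :
    IsPeriodicPt (psi k n) i v ↔ Periodic (quasiPeriodicEquiv n 1 v).1 i := by
  rw [IsPeriodicPt, IsFixedPt, ← (quasiPeriodicEquiv n 1).apply_eq_iff_eq, Subtype.ext_iff,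
    funext_iff]
  simp only [quasiPeriodicEquiv_psi_iterate]
  rfl

theorem isPeriodicPt_psi_mul (k n : ℕ) [NeZero n] (v : Fin n → ZMod k) :
    IsPeriodicPt (psi k n) (k * n) v :=
  isPeriodicPt_psi_iff.2 <| by
    rw [mul_comm]
    exact (quasiPeriodicEquiv n 1 v).2.periodic_mul (by simp)

theorem card_isPeriodicPt_psi (c : ℕ) :
    Nat.card {v // IsPeriodicPt (psi k n) c v} =
      Nat.card {F : ℕ → ZMod k // QuasiPeriodic F n 1 ∧ Periodic F c} :=
  Nat.card_congr <| ((quasiPeriodicEquiv n 1).subtypeEquiv fun _ => isPeriodicPt_psi_iff).trans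
    (Equiv.subtypeSubtypeEquivSubtypeInter _ _)

end Psi

section ZModCoefficients

variable {k n : ℕ} [NeZero k] {F : ℕ → ZMod k}

theorem QuasiPeriodic.dvd_and_coprime_of_periodic (hF : QuasiPeriodic F n 1) {o : ℕ}
    (ho : o ∣ k * n) (hp : Periodic F (k * n / o)) : o ∣ n ∧ Nat.Coprime o k := by
  -- `F (j + n * t) = F j + t`, so a period of the form `n * t` forces `k ∣ t`.
  have dvd_of_periodic (t : ℕ) (ht : Periodic F (n * t)) : k ∣ t := by
    have := hF.add_mul 0 t
    rwa [ht, left_eq_add, nsmul_one, ZMod.natCast_eq_zero_iff] at this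
  obtain ⟨e, he⟩ := dvd_of_periodic _ (by simpa [mul_comm] using hp.nat_mul n)
  have hoe : o * e = n := by
    apply Nat.eq_of_mul_eq_mul_left (NeZero.pos k)
    rw [← Nat.mul_div_cancel' ho, he]
    ring
  refine ⟨⟨e, hoe.symm⟩, ?_⟩
  have hd : k ∣ k / o.gcd k := dvd_of_periodic _ <| by
    have : o / o.gcd k * (k * n / o) = n * (k / o.gcd k) := by
      rw [he, ← hoe, ← mul_assoc, Nat.div_mul_right_comm (Nat.gcd_dvd_left o k),
        Nat.mul_div_assoc _ (Nat.gcd_dvd_right o k)]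
      ring
    simpa [this] using hp.nat_mul (o / o.gcd k)
  have hpos : 0 < k / o.gcd k :=
    Nat.div_pos (Nat.gcd_le_right _ (NeZero.pos k)) (Nat.gcd_pos_of_pos_right o (NeZero.pos k))
  exact (Nat.div_eq_self.1 ((Nat.div_le_self _ _).antisymm (Nat.le_of_dvd hpos hd))).resolve_left
    (NeZero.ne k)

theorem quasiPeriodic_one_and_periodic_iff {o e : ℕ} (hco : Nat.Coprime o k) :
    QuasiPeriodic F (o * e) 1 ∧ Periodic F (k * e) ↔ QuasiPeriodic F e (o : ZMod k)⁻¹ := by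
  have hinv : (o : ZMod k) * (o : ZMod k)⁻¹ = 1 := ZMod.coe_mul_inv_eq_one o hco
  constructor
  · rintro ⟨hF, hp⟩ j
    set x := ((o : ZMod k)⁻¹).val
    have hx : o * x ≡ 1 [MOD k] := by
      rw [← ZMod.natCast_eq_natCast_iff]
      simpa [x] using hinv
    -- the shift by `n * x = e * (o * x)` adds `x = o⁻¹` and agrees with the shift by `e`
    have hmod : j + e * (o * x) ≡ j + e [MOD k * e] := by
      rw [mul_comm k]
      simpa using (hx.mul_left' e).add_left j
    rw [← hp.map_mod_nat, ← hmod, hp.map_mod_nat, ← mul_assoc, mul_comm e, hF.add_mul,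
      nsmul_one, ZMod.natCast_zmod_val]
  · intro hF
    refine ⟨fun j => ?_, fun j => ?_⟩
    · rw [mul_comm, hF.add_mul, nsmul_eq_mul, hinv]
    · rw [mul_comm, hF.add_mul, nsmul_eq_mul, ZMod.natCast_self, zero_mul, add_zero]

theorem card_quasiPeriodic_one_and_periodic [NeZero n] {o : ℕ} (ho : o ∣ k * n) :
    Nat.card {F : ℕ → ZMod k // QuasiPeriodic F n 1 ∧ Periodic F (k * n / o)} =
      if o ∣ n ∧ Nat.Coprime o k then k ^ (n / o) else 0 := by
  split_ifs with h
  · obtain ⟨⟨e, rfl⟩, hco⟩ := h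
    have ho0 : 0 < o := Nat.pos_of_ne_zero (left_ne_zero_of_mul (NeZero.ne (o * e)))
    have : NeZero e := ⟨right_ne_zero_of_mul (NeZero.ne (o * e))⟩
    rw [mul_left_comm, Nat.mul_div_cancel_left _ ho0, Nat.mul_div_cancel_left _ ho0,
      Nat.card_congr ((Equiv.subtypeEquivRight fun F =>
        quasiPeriodic_one_and_periodic_iff hco).trans (quasiPeriodicEquiv e _).symm)]
    simp
  · exact Nat.card_eq_zero.2 <| .inl
      ⟨fun ⟨_, hF, hp⟩ => h (hF.dvd_and_coprime_of_periodic ho hp)⟩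

end ZModCoefficients

theorem AddAction.card_range_orbit (G α : Type*) [AddGroup G] [AddAction G α] :
    Nat.card (Set.range (orbit G : α → Set α)) = Nat.card (orbitRel.Quotient G α) := by
  have h : Set.range (orbit G : α → Set α) = Set.range (orbitRel.Quotient.orbit (G := G)) :=
    Quotient.mk''_surjective.range_comp orbitRel.Quotient.orbit
  rw [h, Nat.card_range_of_injective orbitRel.Quotient.orbit_injective]

section IterateAction

variable {α : Type*} (f : α → α) (N : ℕ) [NeZero N] (hf : ∀ x, IsPeriodicPt f N x)

abbrev iterateAddAction : AddAction (ZMod N) α where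
  vadd g x := f^[g.val] x
  zero_vadd x := by
    change f^[(0 : ZMod N).val] x = x
    rw [ZMod.val_zero, iterate_zero_apply]
  add_vadd g h x := by
    change f^[(g + h).val] x = f^[g.val] (f^[h.val] x)
    rw [ZMod.val_add, (hf x).iterate_mod_apply, iterate_add_apply]

theorem orbit_iterateAddAction (x : α) :
    letI := iterateAddAction f N hf
    AddAction.orbit (ZMod N) x = {y | ∃ i : ℕ, f^[i] x = y} := by
  ext y
  constructor
  · rintro ⟨g, rfl⟩
    exact ⟨g.val, rfl⟩
  · rintro ⟨i, rfl⟩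
    refine ⟨i, ?_⟩
    change f^[(i : ZMod N).val] x = _
    rw [ZMod.val_natCast, (hf x).iterate_mod_apply]

theorem fixedBy_iterateAddAction (g : ZMod N) :
    letI := iterateAddAction f N hf
    AddAction.fixedBy α g = {x | IsPeriodicPt f (N / addOrderOf g) x} := by
  have hg : N / addOrderOf g = N.gcd g.val := by
    conv_lhs => rw [← ZMod.natCast_zmod_val g, ZMod.addOrderOf_coe _ (NeZero.ne N)]
    exact Nat.div_div_self (Nat.gcd_dvd_left _ _) (NeZero.ne N)
  ext x
  rw [hg]
  exact ⟨(hf x).gcd, fun hx => hx.trans_dvd (Nat.gcd_dvd_right _ _)⟩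

theorem card_iterate_orbits :
    letI := iterateAddAction f N hf
    Nat.card {S : Set α // ∃ x, S = {y | ∃ i : ℕ, f^[i] x = y}} =
      Nat.card (AddAction.orbitRel.Quotient (ZMod N) α) := by
  rw [← AddAction.card_range_orbit]
  refine Nat.card_congr (Equiv.subtypeEquivRight fun S => ?_)
  simp only [Set.mem_range, orbit_iterateAddAction, eq_comm]

end IterateAction

theorem AddAction.card_orbitRel_quotient_mul_card (G α : Type*) [AddGroup G] [Fintype G]
    [AddAction G α] [Finite α] :
    Nat.card (orbitRel.Quotient G α) * Fintype.card G = ∑ g : G, Nat.card (fixedBy α g) := by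
  have := Fintype.ofFinite α
  classical
  have := Fintype.ofFinite (orbitRel.Quotient G α)
  simp only [Nat.card_eq_fintype_card]
  exact (sum_card_fixedBy_eq_card_orbits_mul_card_addGroup G α).symm

theorem sum_addOrderOf_eq_sum_divisors {G R : Type*} [AddGroup G] [Fintype G] [IsAddCyclic G]
    [AddCommMonoid R] (f : ℕ → R) :
    ∑ g : G, f (addOrderOf g) = ∑ d ∈ (Fintype.card G).divisors, d.totient • f d := by
  classical
  rw [← Finset.sum_fiberwise_of_maps_to (t := (Fintype.card G).divisors) (g := addOrderOf)
    fun g _ => Nat.mem_divisors.2 ⟨addOrderOf_dvd_card, Fintype.card_ne_zero⟩]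
  refine Finset.sum_congr rfl fun d hd => ?_
  rw [Finset.sum_congr rfl fun g hg => congrArg f (Finset.mem_filter.1 hg).2, Finset.sum_const,
    IsAddCyclic.card_addOrderOf_eq_totient (Nat.dvd_of_mem_divisors hd)]

theorem dvd_and_coprime_iff_dvd_of_maximal {k n a d : ℕ} (hn : 0 < n) (han : a ∣ n)
    (hak : Nat.Coprime a k) (hmax : ∀ d : ℕ, d ∣ n → Nat.Coprime d k → d ≤ a) :
    d ∣ n ∧ Nat.Coprime d k ↔ d ∣ a := by
  refine ⟨fun ⟨hdn, hdk⟩ => ?_, fun hda => ⟨hda.trans han, hak.coprime_dvd_left hda⟩⟩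
  have hlcm : d.lcm a ∣ n := Nat.lcm_dvd hdn han
  have hle := hmax _ hlcm (Nat.Coprime.coprime_dvd_left (Nat.lcm_dvd_mul d a) (hdk.mul_left hak))
  have : d.lcm a = a :=
    hle.antisymm (Nat.le_of_dvd (Nat.pos_of_dvd_of_pos hlcm hn) (Nat.dvd_lcm_right d a))
  exact this ▸ Nat.dvd_lcm_left d a

/-- The number of orbits of the cyclic group generated by ψ acting on (ZMod k)^n
equals (1/(kn)) · Σ_{d ∣ a} φ(d) k^{n/d}, where a is the largest divisor of n
coprime to k (the identity is stated multiplied through by kn). -/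
theorem number_of_orbits (k n a : ℕ) (hk : 0 < k) (hn : 0 < n)
    (han : a ∣ n) (hak : Nat.Coprime a k)
    (hmax : ∀ d : ℕ, d ∣ n → Nat.Coprime d k → d ≤ a) :
    Nat.card {S : Set (Fin n → ZMod k) //
        ∃ v : Fin n → ZMod k, S = {w | ∃ i : ℕ, (psi k n)^[i] v = w}} * (k * n) =
      ∑ d ∈ a.divisors, d.totient * k ^ (n / d) := by
  have : NeZero k := ⟨hk.ne'⟩
  have : NeZero n := ⟨hn.ne'⟩
  have : NeZero (k * n) := ⟨(Nat.mul_pos hk hn).ne'⟩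
  let := iterateAddAction (psi k n) (k * n) (isPeriodicPt_psi_mul k n)
  have hfixed (g : ZMod (k * n)) : Nat.card (AddAction.fixedBy (Fin n → ZMod k) g) =
      if addOrderOf g ∣ a then k ^ (n / addOrderOf g) else 0 := by
    rw [fixedBy_iterateAddAction, Set.coe_ofPred, card_isPeriodicPt_psi,
      card_quasiPeriodic_one_and_periodic (by simpa using addOrderOf_dvd_card (x := g)),
      if_congr (dvd_and_coprime_iff_dvd_of_maximal hn han hak hmax) rfl rfl]
  calc _ = Nat.card (AddAction.orbitRel.Quotient (ZMod (k * n)) (Fin n → ZMod k)) *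
        Fintype.card (ZMod (k * n)) := by
        rw [card_iterate_orbits (psi k n) (k * n) (isPeriodicPt_psi_mul k n), ZMod.card]
    _ = ∑ g : ZMod (k * n), if addOrderOf g ∣ a then k ^ (n / addOrderOf g) else 0 := by
        rw [AddAction.card_orbitRel_quotient_mul_card]
        simp only [hfixed]
    _ = ∑ d ∈ (k * n).divisors, d.totient * if d ∣ a then k ^ (n / d) else 0 := by
        rw [sum_addOrderOf_eq_sum_divisors (fun d => if d ∣ a then k ^ (n / d) else 0), ZMod.card]
        simp only [smul_eq_mul]
    _ = ∑ d ∈ a.divisors, d.totient * k ^ (n / d) := by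
        simp_rw [mul_ite, mul_zero]
        rw [← Finset.sum_filter, Nat.divisors_filter_dvd_of_dvd (NeZero.ne _) (han.mul_left k)]
end

section
/- Let n ≥ 2, a_L, a_R ∈ ℝ, and let g : ℝ^n → ℝ^n be defined by g(y) = A_L y + e₁ if y₁ ≤ 0 and g(y) = A_R y + e₁ if y₁ ≥ 0, where A_L, A_R are companion matrices with first column zero except bottom entry a_L (resp. a_R), and superdiagonal of 1's. Let h : ℝ → ℝ be h(z) = a_L z + 1 for z ≤ 0 and h(z) = a_R z + 1 for z ≥ 0. Then for all x ∈ ℝ^n, g^n(x) = (h(x₁), h(x₂+1)−1, ..., h(xₙ+1)−1), i.e. the n-th iterate of g is (up to translation) a direct product of n copies of h. -/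
/-! In the coordinates w = y + (0, 1, …, 1) the map g becomes the rotation
w ↦ (w₂, …, wₙ, h(w₁)), whose n-th iterate applies h to every coordinate. -/

/-- The n×n companion matrix with superdiagonal 1's, bottom-left entry a, other entries 0. -/
def compMat (n : ℕ) (a : ℝ) : Matrix (Fin n) (Fin n) ℝ :=
  fun i j => if (i : ℕ) + 1 = (j : ℕ) then 1
    else if (i : ℕ) = n - 1 ∧ (j : ℕ) = 0 then a else 0

/-- The piecewise-linear map g(y) = A_L y + e₁ (y₁ ≤ 0), A_R y + e₁ (y₁ ≥ 0). -/
noncomputable def gmap (n : ℕ) [NeZero n] (aL aR : ℝ) : (Fin n → ℝ) → (Fin n → ℝ) :=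
  fun y => (if y 0 ≤ 0 then compMat n aL else compMat n aR).mulVec y + Pi.single 0 1

/-- The skew tent map h(z) = a_L z + 1 (z ≤ 0), a_R z + 1 (z ≥ 0). -/
noncomputable def stm (aL aR : ℝ) : ℝ → ℝ :=
  fun z => if z ≤ 0 then aL * z + 1 else aR * z + 1

def rotateWith {α : Type*} {n : ℕ} (f : α → α) (w : Fin n → α) : Fin n → α :=
  fun i => if h : i.val + 1 < n then w ⟨i + 1, h⟩ else f (w ⟨0, by omega⟩)

theorem iterate_rotateWith_apply {α : Type*} {n : ℕ} (f : α → α) (w : Fin n → α) (k : ℕ)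
    (hk : k ≤ n) (i : Fin n) :
    (rotateWith f)^[k] w i =
      if h : i.val + k < n then w ⟨i + k, h⟩ else f (w ⟨i + k - n, by omega⟩) := by
  induction k generalizing w with
  | zero => simp
  | succ k ih =>
    rw [Function.iterate_succ_apply, ih _ (by omega)]
    by_cases hlt : i.val + (k + 1) < n
    · simp [hlt, show i.val + k < n by omega, rotateWith, add_assoc]
    by_cases hwrap : i.val + k < n
    · simp [hwrap, rotateWith, ← add_assoc]
    · have hwrap' : i.val + k - n + 1 < n := by omega
      simp only [hlt, hwrap, rotateWith, hwrap', dite_true, dite_false]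
      congr 3
      omega

theorem iterate_rotateWith_self {α : Type*} {n : ℕ} (f : α → α) (w : Fin n → α) :
    (rotateWith f)^[n] w = f ∘ w := by
  funext i
  simp [iterate_rotateWith_apply f w n le_rfl i]

theorem compMat_row (n : ℕ) (a : ℝ) (i : Fin n) :
    compMat n a i =
      if h : i.val + 1 < n then Pi.single ⟨i + 1, h⟩ 1 else Pi.single ⟨0, by omega⟩ a := by
  funext j
  have := i.isLt
  have := j.isLt
  split_ifs with h
  all_goals simp only [compMat, Pi.single_apply, Fin.ext_iff]
  all_goals split_ifs <;> first | rfl | omega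

theorem compMat_mulVec (n : ℕ) (a : ℝ) (y : Fin n → ℝ) :
    (compMat n a).mulVec y = rotateWith (a * ·) y := by
  funext i
  rw [Matrix.mulVec, compMat_row, rotateWith]
  split_ifs <;> simp [single_dotProduct]

theorem gmap_apply_eq_rotateWith (n : ℕ) [NeZero n] (aL aR : ℝ) (y : Fin n → ℝ) :
    gmap n aL aR y = rotateWith ((if y 0 ≤ 0 then aL else aR) * ·) y + Pi.single 0 1 := by
  unfold gmap
  split_ifs <;> simp [compMat_mulVec]

theorem gmap_semiconj_rotateWith (n : ℕ) [NeZero n] (aL aR : ℝ) :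
    Function.Semiconj (· + (1 - Pi.single 0 1)) (gmap n aL aR) (rotateWith (stm aL aR)) := by
  intro y
  funext i
  rw [gmap_apply_eq_rotateWith]
  by_cases h : i.val + 1 < n
  · have hsucc : (⟨i + 1, h⟩ : Fin n) ≠ 0 := fun hc => by simpa using congrArg Fin.val hc
    simp [rotateWith, h, Pi.single_apply, hsucc]
  · simp only [rotateWith, dif_neg h, stm, Pi.add_apply, Pi.sub_apply, Pi.one_apply, Fin.mk_zero',
      Pi.single_eq_same, sub_self, add_zero]
    split_ifs <;> ring

theorem gmap_iterate_directProduct_general (n : ℕ) [NeZero n] (aL aR : ℝ) :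
    ∀ x : Fin n → ℝ,
      (gmap n aL aR)^[n] x =
        fun j => if j = 0 then stm aL aR (x 0) else stm aL aR (x j + 1) - 1 := by
  intro x
  funext j
  have h := congrFun ((gmap_semiconj_rotateWith n aL aR).iterate_right n x) j
  simp only [iterate_rotateWith_self] at h
  rcases eq_or_ne j 0 with rfl | hj
  · simpa using h
  · simp [hj] at h ⊢
    linarith

/-- The n-th iterate of g is (up to translation) a direct product of n copies of h:
g^n(x) = (h(x₁), h(x₂+1)−1, ..., h(xₙ+1)−1). -/
theorem gmap_iterate_directProduct (n : ℕ) [NeZero n] (hn : 2 ≤ n) (aL aR : ℝ) :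
    ∀ x : Fin n → ℝ,
      (gmap n aL aR)^[n] x =
        fun j => if j = 0 then stm aL aR (x 0) else stm aL aR (x j + 1) - 1 :=
  gmap_iterate_directProduct_general n aL aR
end

section
/- Let h(z) = a_L z + 1 for z ≤ 0 and h(z) = a_R z + 1 for z ≥ 0, with a_L > 0 and a_R < 0. Suppose the points h^i(0) for 0 ≤ i ≤ 2k+1 satisfy the ordering h²(0) < h^{k+2}(0) < h³(0) < ⋯ < h^{2k−1}(0) < h^k(0) < 0 < h^{2k}(0) < h^{k+1}(0) < h^{2k+1}(0) < h(0). Define intervals I₀ = [h^{k+1}(0), h(0)] and I_i = [h^{i+1}(0), h^{i+k+1}(0)] for 1 ≤ i ≤ k−1. Then the intervals I₀, ..., I_{k−1} are mutually disjoint and h(I_i) = I_{(i+1) mod k} for all 0 ≤ i ≤ k−1. -/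
open Set

theorem Set.image_affine_Icc_of_neg {K : Type*} [Field K] [LinearOrder K] [IsStrictOrderedRing K]
    {a : K} (h : a < 0) (b c d : K) :
    (fun x => a * x + b) '' Icc c d = Icc (a * d + b) (a * c + b) := by
  have hcomp : (fun x => a * x + b) = (fun x => -a * x + b) ∘ Neg.neg := by
    funext x
    simp only [Function.comp_apply, neg_mul_neg]
  rw [hcomp, image_comp, image_neg_Icc, image_affine_Icc' (neg_pos.2 h), neg_mul_neg, neg_mul_neg]

theorem Set.disjoint_Icc_Icc_of_lt {α : Type*} [Preorder α] {a b c d : α} (h : b < c) :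
    Disjoint (Icc a b) (Icc c d) :=
  (Iic_disjoint_Ici.2 h.not_ge).mono Icc_subset_Iic_self Icc_subset_Ici_self

section Interleaved

variable {α : Type*} [Preorder α] {x : ℕ → α} {k : ℕ}

/-- The chain `x₂ < x_{k+2} < x₃ < x_{k+3} < ⋯ < x_{2k-1} < x_k`. -/
def Interleaved (x : ℕ → α) (k : ℕ) : Prop :=
  ∀ i, 2 ≤ i → i ≤ k - 1 → x i < x (k + i) ∧ x (k + i) < x (i + 1)

theorem Interleaved.strictMonoOn (hx : Interleaved x k) : StrictMonoOn x (Icc 2 k) :=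
  strictMonoOn_of_lt_succ ordConnected_Icc fun i _ hi hsi => by
    rw [Order.succ_eq_add_one] at hsi ⊢
    have := hx i hi.1 (by grind)
    exact this.1.trans this.2

theorem Interleaved.upper_lt_lower (hx : Interleaved x k) (hk2k : x k < x (2 * k))
    (h2k : x (2 * k) < x (k + 1)) {i j : ℕ} (hi : 1 ≤ i) (hij : i < j) (hjk : j ≤ k) :
    x (i + k + 1) < x (j + 1) := by
  obtain rfl | hik : i = k - 1 ∨ i ≤ k - 2 := by omega
  · obtain rfl : k = j := by omega
    rwa [show k - 1 + k + 1 = 2 * k by omega]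
  have hmono := hx.strictMonoOn.monotoneOn
  have hupper : x (i + k + 1) < x (i + 2) := by
    simpa only [show k + (i + 1) = i + k + 1 by omega] using (hx (i + 1) (by omega) (by omega)).2
  rcases hjk.lt_or_eq with hj | rfl
  · exact hupper.trans_le (hmono ⟨by omega, by omega⟩ ⟨by omega, by omega⟩ (by omega))
  · calc x (i + j + 1) < x (i + 2) := hupper
      _ ≤ x j := hmono ⟨by omega, by omega⟩ ⟨by omega, le_rfl⟩ (by omega)
      _ < x (2 * j) := hk2k
      _ < x (j + 1) := h2k

theorem Interleaved.pairwise_disjoint_Icc (hx : Interleaved x k) (hk2k : x k < x (2 * k))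
    (h2k : x (2 * k) < x (k + 1)) {I : ℕ → Set α} (hI0 : I 0 = Icc (x (k + 1)) (x 1))
    (hIi : ∀ i, 1 ≤ i → i ≤ k - 1 → I i = Icc (x (i + 1)) (x (i + k + 1))) :
    ∀ i j, i < k → j < k → i ≠ j → Disjoint (I i) (I j) := by
  have hlt : ∀ i j, i < j → j < k → Disjoint (I i) (I j) := by
    intro i j hij hjk
    rcases Nat.eq_zero_or_pos i with rfl | hi
    · rw [hI0, hIi j hij (by omega)]
      exact (disjoint_Icc_Icc_of_lt (hx.upper_lt_lower hk2k h2k hij hjk le_rfl)).symm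
    · rw [hIi i hi (by omega), hIi j (by omega) (by omega)]
      exact disjoint_Icc_Icc_of_lt (hx.upper_lt_lower hk2k h2k hi hij hjk.le)
  intro i j hi hj hne
  rcases hne.lt_or_gt with hij | hji
  · exact hlt i j hij hj
  · exact (hlt j i hji hi).symm

end Interleaved

section SkewTent

variable {aL aR : ℝ}

theorem stm_of_nonpos {z : ℝ} (hz : z ≤ 0) : stm aL aR z = aL * z + 1 := if_pos hz

theorem stm_of_nonneg {z : ℝ} (hz : 0 ≤ z) : stm aL aR z = aR * z + 1 := by
  rcases hz.eq_or_lt with rfl | hz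
  · simp [stm]
  · exact if_neg hz.not_ge

theorem stm_zero : stm aL aR 0 = 1 := by simp [stm]

theorem image_stm_Icc_of_nonpos (haL : 0 < aL) {c d : ℝ} (hc : c ≤ 0) (hd : d ≤ 0) :
    stm aL aR '' Icc c d = Icc (stm aL aR c) (stm aL aR d) := by
  rw [image_congr fun z hz => stm_of_nonpos (hz.2.trans hd), image_affine_Icc' haL,
    stm_of_nonpos hc, stm_of_nonpos hd]

theorem image_stm_Icc_of_nonneg (haR : aR < 0) {c d : ℝ} (hc : 0 ≤ c) (hd : 0 ≤ d) :
    stm aL aR '' Icc c d = Icc (stm aL aR d) (stm aL aR c) := by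
  rw [image_congr fun z hz => stm_of_nonneg (hc.trans hz.1), image_affine_Icc_of_neg haR,
    stm_of_nonneg hc, stm_of_nonneg hd]

theorem image_stm_Icc_of_nonpos_of_nonneg (haL : 0 < aL) (haR : aR < 0) {c d : ℝ} (hc : c ≤ 0)
    (hd : 0 ≤ d) : stm aL aR '' Icc c d = Icc (min (stm aL aR c) (stm aL aR d)) 1 := by
  have hc1 : stm aL aR c ≤ 1 := by rw [stm_of_nonpos hc]; nlinarith
  have hd1 : stm aL aR d ≤ 1 := by rw [stm_of_nonneg hd]; nlinarith
  rw [← Icc_union_Icc_eq_Icc hc hd, image_union, image_stm_Icc_of_nonpos haL hc le_rfl,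
    image_stm_Icc_of_nonneg haR le_rfl hd, stm_zero, Icc_union_Icc' hd1 hc1, max_self]

theorem image_stm_Icc_iterate_of_nonpos (haL : 0 < aL) {z : ℝ} {m n : ℕ}
    (hm : (stm aL aR)^[m] z ≤ 0) (hn : (stm aL aR)^[n] z ≤ 0) :
    stm aL aR '' Icc ((stm aL aR)^[m] z) ((stm aL aR)^[n] z) =
      Icc ((stm aL aR)^[m + 1] z) ((stm aL aR)^[n + 1] z) := by
  rw [image_stm_Icc_of_nonpos haL hm hn, Function.iterate_succ_apply',
    Function.iterate_succ_apply']

theorem image_stm_Icc_iterate_of_nonneg (haR : aR < 0) {z : ℝ} {m n : ℕ}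
    (hm : 0 ≤ (stm aL aR)^[m] z) (hn : 0 ≤ (stm aL aR)^[n] z) :
    stm aL aR '' Icc ((stm aL aR)^[m] z) ((stm aL aR)^[n] z) =
      Icc ((stm aL aR)^[n + 1] z) ((stm aL aR)^[m + 1] z) := by
  rw [image_stm_Icc_of_nonneg haR hm hn, Function.iterate_succ_apply',
    Function.iterate_succ_apply']

theorem image_stm_Icc_iterate_of_nonpos_of_nonneg (haL : 0 < aL) (haR : aR < 0) {z : ℝ}
    {m n : ℕ} (hm : (stm aL aR)^[m] z ≤ 0) (hn : 0 ≤ (stm aL aR)^[n] z)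
    (hmn : (stm aL aR)^[m + 1] z ≤ (stm aL aR)^[n + 1] z) :
    stm aL aR '' Icc ((stm aL aR)^[m] z) ((stm aL aR)^[n] z) = Icc ((stm aL aR)^[m + 1] z) 1 := by
  rw [image_stm_Icc_of_nonpos_of_nonneg haL haR hm hn, ← Function.iterate_succ_apply' (stm aL aR),
    ← Function.iterate_succ_apply' (stm aL aR), min_eq_left hmn]

end SkewTent

theorem skew_tent_cycle_of_intervals_general (k : ℕ) (hk : 2 ≤ k) (aL aR : ℝ)
    (haL : 0 < aL) (haR : aR < 0)
    (h : ℝ → ℝ) (hdef : h = stm aL aR)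
    (hord1 : ∀ i : ℕ, 2 ≤ i → i ≤ k - 1 → h^[i] 0 < h^[k + i] 0)
    (hord2 : ∀ i : ℕ, 2 ≤ i → i ≤ k - 1 → h^[k + i] 0 < h^[i + 1] 0)
    (hord3 : h^[k] 0 < 0)
    (hord4 : 0 < h^[2 * k] 0)
    (hord5 : h^[2 * k] 0 < h^[k + 1] 0)
    (hord6 : h^[k + 1] 0 < h^[2 * k + 1] 0)
    (I : ℕ → Set ℝ)
    (hI0 : I 0 = Set.Icc (h^[k + 1] 0) (h^[1] 0))
    (hIi : ∀ i : ℕ, 1 ≤ i → i ≤ k - 1 → I i = Set.Icc (h^[i + 1] 0) (h^[i + k + 1] 0)) :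
    (∀ i j : ℕ, i < k → j < k → i ≠ j → Disjoint (I i) (I j)) ∧
      (∀ i : ℕ, i < k → h '' I i = I ((i + 1) % k)) := by
  subst hdef
  have hx : Interleaved (fun n => (stm aL aR)^[n] 0) k := fun i hi hik =>
    ⟨hord1 i hi hik, hord2 i hi hik⟩
  have hk2k := hord3.trans hord4
  refine ⟨hx.pairwise_disjoint_Icc hk2k hord5 hI0 hIi, fun i hi => ?_⟩
  obtain rfl | ⟨hi1, hik⟩ | rfl : i = 0 ∨ 1 ≤ i ∧ i ≤ k - 2 ∨ i = k - 1 := by omega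
  · have hpos : 0 ≤ (stm aL aR)^[k + 1] 0 := (hord4.trans hord5).le
    have hone : 0 ≤ (stm aL aR)^[1] 0 := by simp [stm_zero]
    rw [Nat.mod_eq_of_lt (by omega : 0 + 1 < k), hI0, hIi 1 le_rfl (by omega),
      image_stm_Icc_iterate_of_nonneg haR hpos hone, show 1 + k + 1 = k + 1 + 1 by omega]
  · have hneg : ∀ n, 2 ≤ n → n ≤ k → (stm aL aR)^[n] 0 ≤ 0 := fun n h2n hnk =>
      (hx.strictMonoOn.monotoneOn ⟨h2n, hnk⟩ ⟨hk, le_rfl⟩ hnk).trans hord3.le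
    have hupper : (stm aL aR)^[i + k + 1] 0 ≤ 0 :=
      (hx.upper_lt_lower hk2k hord5 hi1 (Nat.lt_succ_self i) (by omega)).le.trans
        (hneg (i + 2) (by omega) (by omega))
    rw [Nat.mod_eq_of_lt (by omega : i + 1 < k), hIi i hi1 (by omega),
      hIi (i + 1) (by omega) (by omega),
      image_stm_Icc_iterate_of_nonpos haL (hneg (i + 1) (by omega) (by omega)) hupper,
      show i + 1 + k + 1 = i + k + 1 + 1 by omega]
  · rw [show (k - 1 + 1) % k = 0 by rw [Nat.sub_add_cancel (by omega), Nat.mod_self], hI0,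
      hIi (k - 1) (by omega) le_rfl, show k - 1 + 1 = k by omega,
      show k - 1 + k + 1 = 2 * k by omega,
      image_stm_Icc_iterate_of_nonpos_of_nonneg haL haR hord3.le hord4.le hord6.le,
      Function.iterate_one, stm_zero]

/-- Under the orbit ordering of Lemma 6.1, the intervals I₀ = [h^{k+1}(0), h(0)],
I_i = [h^{i+1}(0), h^{i+k+1}(0)] (1 ≤ i ≤ k−1) are mutually disjoint and
h(I_i) = I_{(i+1) mod k}. -/
theorem skew_tent_cycle_of_intervals (k : ℕ) (hk : 2 ≤ k) (aL aR : ℝ)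
    (haL : 0 < aL) (haR : aR < 0)
    (h : ℝ → ℝ) (hdef : h = stm aL aR)
    (hord1 : ∀ i : ℕ, 2 ≤ i → i ≤ k - 1 → h^[i] 0 < h^[k + i] 0)
    (hord2 : ∀ i : ℕ, 2 ≤ i → i ≤ k - 1 → h^[k + i] 0 < h^[i + 1] 0)
    (hord3 : h^[k] 0 < 0)
    (hord4 : 0 < h^[2 * k] 0)
    (hord5 : h^[2 * k] 0 < h^[k + 1] 0)
    (hord6 : h^[k + 1] 0 < h^[2 * k + 1] 0)
    (hord7 : h^[2 * k + 1] 0 < h^[1] 0)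
    (I : ℕ → Set ℝ)
    (hI0 : I 0 = Set.Icc (h^[k + 1] 0) (h^[1] 0))
    (hIi : ∀ i : ℕ, 1 ≤ i → i ≤ k - 1 → I i = Set.Icc (h^[i + 1] 0) (h^[i + k + 1] 0)) :
    (∀ i j : ℕ, i < k → j < k → i ≠ j → Disjoint (I i) (I j)) ∧
      (∀ i : ℕ, i < k → h '' I i = I ((i + 1) % k)) :=
  skew_tent_cycle_of_intervals_general k hk aL aR haL haR h hdef hord1 hord2 hord3 hord4 hord5 hord6
    I hI0 hIi
end

section
/- Let h(z) = a_L z + 1 for z ≤ 0 and h(z) = a_R z + 1 for z ≥ 0 with a_L ∈ (0,1) and a_R < 0, and assume the orbit ordering of Lemma on the I_i holds, so that h maps each I_i onto I_{(i+1) mod k} with I_{k−1} the unique interval containing 0. Then for any point y whose forward orbit under h cycles through the intervals I₀, ..., I_{k−1}, the derivative product ∏_{i=0}^{k−1} h'(h^i(y)) equals either a_L^{k−2} a_R² or a_L^{k−1} a_R, according to whether the orbit visits the region z > 0 twice or once per cycle. -/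
/-- The slope (derivative) of the skew tent map. -/
noncomputable def stmDeriv (aL aR : ℝ) : ℝ → ℝ :=
  fun z => if z < 0 then aL else aR

/-!
The ordering hypotheses give `h^[m] 0 < h^[k + m] 0 < h^[m + 1] 0` for `2 ≤ m ≤ k - 1`, so the
points `h^[m] 0` increase from `m = 2` up to `h^[k] 0 < 0`. Hence every `I j` with
`1 ≤ j ≤ k - 2`, whose right endpoint `h^[k + j + 1] 0` lies below `h^[j + 2] 0`, is contained
in the negative half-line, while `I 0` lies to the right of `h^[2k] 0 > 0`. Along one cycle the
orbit is therefore positive on its visit to `I 0`, possibly on its visit to `I (k - 1)`, and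
negative everywhere else, and the derivative product is `a_L ^ (k - p) * a_R ^ p` where `p ∈ {1, 2}`
counts the positive visits.
-/

open Finset

theorem prod_stmDeriv_eq_pow_mul_pow {ι : Type*} (aL aR : ℝ) (s : Finset ι) (x : ι → ℝ)
    (hx : ∀ i ∈ s, x i ≠ 0) :
    ∏ i ∈ s, stmDeriv aL aR (x i) =
      aL ^ (#s - #{i ∈ s | 0 < x i}) * aR ^ #{i ∈ s | 0 < x i} := by
  have hderiv : ∀ i ∈ s, stmDeriv aL aR (x i) = if 0 < x i then aR else aL := fun i hi => by
    rcases (hx i hi).lt_or_gt with hneg | hpos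
    · simp [stmDeriv, hneg, hneg.not_gt]
    · simp [stmDeriv, hpos, hpos.not_gt]
  rw [prod_congr rfl hderiv, prod_ite, prod_const, prod_const, mul_comm,
    ← card_filter_add_card_filter_not (s := s) (fun i => 0 < x i), Nat.add_sub_cancel_left]

theorem lt_zero_of_interleaved {u : ℕ → ℝ} {k : ℕ}
    (hlt_add : ∀ i, 2 ≤ i → i ≤ k - 1 → u i < u (k + i))
    (hadd_lt : ∀ i, 2 ≤ i → i ≤ k - 1 → u (k + i) < u (i + 1)) (hk : u k < 0)
    {j : ℕ} (hj : 1 ≤ j) (hjk : j + 2 ≤ k) : u (j + k + 1) < 0 := by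
  have hmono : MonotoneOn u (Set.Icc 2 k) := by
    refine (strictMonoOn_of_lt_succ Set.ordConnected_Icc fun m _ hm hm' => ?_).monotoneOn
    rw [Order.succ_eq_add_one] at hm' ⊢
    have hmk : m ≤ k - 1 := by have := hm'.2; omega
    exact (hlt_add m hm.1 hmk).trans (hadd_lt m hm.1 hmk)
  calc u (j + k + 1) = u (k + (j + 1)) := by rw [show j + k + 1 = k + (j + 1) by omega]
    _ < u (j + 2) := hadd_lt (j + 1) (by omega) (by omega)
    _ ≤ u k := hmono ⟨by omega, hjk⟩ ⟨by omega, le_rfl⟩ hjk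
    _ < 0 := hk

theorem card_filter_add_mod_mem_le (i0 k : ℕ) (T : Finset ℕ) :
    #{i ∈ range k | (i0 + i) % k ∈ T} ≤ #T := by
  refine card_le_card_of_injOn (fun i => (i0 + i) % k) (fun i hi => (mem_filter.1 hi).2) ?_
  intro i hi j hj hij
  have hik := mem_range.1 (mem_filter.1 hi).1
  have hjk := mem_range.1 (mem_filter.1 hj).1
  have hmod : i ≡ j [MOD k] := Nat.ModEq.add_left_cancel' i0 hij
  rwa [Nat.ModEq, Nat.mod_eq_of_lt hik, Nat.mod_eq_of_lt hjk] at hmod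

theorem exists_lt_add_mod_eq_zero (i0 : ℕ) {k : ℕ} (hk : 0 < k) : ∃ i < k, (i0 + i) % k = 0 := by
  refine ⟨(k - i0 % k) % k, Nat.mod_lt _ hk, ?_⟩
  have hlt := Nat.mod_lt i0 hk
  have hdiv := Nat.mod_add_div i0 k
  rw [Nat.add_mod_mod, show i0 + (k - i0 % k) = k * (i0 / k) + k by omega,
    Nat.add_mod_right, Nat.mul_mod_right]

theorem derivative_product_over_cycle_general (k : ℕ) (hk : 2 ≤ k) (aL aR : ℝ)
    (h : ℝ → ℝ)
    (hord1 : ∀ i : ℕ, 2 ≤ i → i ≤ k - 1 → h^[i] 0 < h^[k + i] 0)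
    (hord2 : ∀ i : ℕ, 2 ≤ i → i ≤ k - 1 → h^[k + i] 0 < h^[i + 1] 0)
    (hord3 : h^[k] 0 < 0)
    (hord4 : 0 < h^[2 * k] 0)
    (hord5 : h^[2 * k] 0 < h^[k + 1] 0)
    (I : ℕ → Set ℝ)
    (hI0 : I 0 = Set.Icc (h^[k + 1] 0) (h^[1] 0))
    (hIi : ∀ i : ℕ, 1 ≤ i → i ≤ k - 1 → I i = Set.Icc (h^[i + 1] 0) (h^[i + k + 1] 0))
    (y : ℝ) (i0 : ℕ)
    (hy : ∀ i : ℕ, h^[i] y ∈ I ((i0 + i) % k))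
    (hne : ∀ i : ℕ, h^[i] y ≠ 0) :
    (((Finset.range k).filter (fun i => 0 < h^[i] y)).card = 1 ∨
        ((Finset.range k).filter (fun i => 0 < h^[i] y)).card = 2) ∧
      (((Finset.range k).filter (fun i => 0 < h^[i] y)).card = 2 →
        ∏ i ∈ Finset.range k, stmDeriv aL aR (h^[i] y) = aL ^ (k - 2) * aR ^ 2) ∧
      (((Finset.range k).filter (fun i => 0 < h^[i] y)).card = 1 →
        ∏ i ∈ Finset.range k, stmDeriv aL aR (h^[i] y) = aL ^ (k - 1) * aR) := by
  set S := {i ∈ range k | 0 < h^[i] y}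
  have hS_sub : S ⊆ {i ∈ range k | (i0 + i) % k ∈ ({0, k - 1} : Finset ℕ)} := by
    intro i hi
    obtain ⟨hik, hpos⟩ := mem_filter.1 hi
    refine mem_filter.2 ⟨hik, ?_⟩
    by_contra hr
    simp only [mem_insert, mem_singleton, not_or] at hr
    have hr_lt := Nat.mod_lt (i0 + i) (show 0 < k by omega)
    have hmem := hy i
    rw [hIi _ (by omega) (by omega)] at hmem
    have hright_neg := lt_zero_of_interleaved (u := fun n => h^[n] 0) hord1 hord2 hord3
      (j := (i0 + i) % k) (by omega) (by omega)
    exact (hmem.2.trans_lt hright_neg).not_gt hpos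
  have hS_pos : S.Nonempty := by
    obtain ⟨i, hik, hi⟩ := exists_lt_add_mod_eq_zero i0 (show 0 < k by omega)
    have hmem := hy i
    rw [hi, hI0] at hmem
    exact ⟨i, mem_filter.2 ⟨mem_range.2 hik, hord4.trans (hord5.trans_le hmem.1)⟩⟩
  have hcard : #S = 1 ∨ #S = 2 := by
    have := (card_le_card hS_sub).trans ((card_filter_add_mod_mem_le i0 k _).trans card_le_two)
    have := hS_pos.card_pos
    omega
  rw [prod_stmDeriv_eq_pow_mul_pow aL aR _ _ fun i _ => hne i, card_range]
  exact ⟨hcard, fun h2 => by rw [h2], fun h1 => by rw [h1, pow_one]⟩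

/-- For a point y whose forward orbit cycles through the intervals I₀, ..., I_{k−1}
(never hitting 0), the derivative product over one cycle equals a_L^{k−2} a_R² or
a_L^{k−1} a_R, according to whether the orbit visits z > 0 twice or once per cycle. -/
theorem derivative_product_over_cycle (k : ℕ) (hk : 2 ≤ k) (aL aR : ℝ)
    (haL0 : 0 < aL) (haL1 : aL < 1) (haR : aR < 0)
    (h : ℝ → ℝ) (hdef : h = stm aL aR)
    (hord1 : ∀ i : ℕ, 2 ≤ i → i ≤ k - 1 → h^[i] 0 < h^[k + i] 0)
    (hord2 : ∀ i : ℕ, 2 ≤ i → i ≤ k - 1 → h^[k + i] 0 < h^[i + 1] 0)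
    (hord3 : h^[k] 0 < 0)
    (hord4 : 0 < h^[2 * k] 0)
    (hord5 : h^[2 * k] 0 < h^[k + 1] 0)
    (hord6 : h^[k + 1] 0 < h^[2 * k + 1] 0)
    (hord7 : h^[2 * k + 1] 0 < h^[1] 0)
    (I : ℕ → Set ℝ)
    (hI0 : I 0 = Set.Icc (h^[k + 1] 0) (h^[1] 0))
    (hIi : ∀ i : ℕ, 1 ≤ i → i ≤ k - 1 → I i = Set.Icc (h^[i + 1] 0) (h^[i + k + 1] 0))
    (y : ℝ) (i0 : ℕ) (hi0 : i0 < k)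
    (hy : ∀ i : ℕ, h^[i] y ∈ I ((i0 + i) % k))
    (hne : ∀ i : ℕ, h^[i] y ≠ 0) :
    (((Finset.range k).filter (fun i => 0 < h^[i] y)).card = 1 ∨
        ((Finset.range k).filter (fun i => 0 < h^[i] y)).card = 2) ∧
      (((Finset.range k).filter (fun i => 0 < h^[i] y)).card = 2 →
        ∏ i ∈ Finset.range k, stmDeriv aL aR (h^[i] y) = aL ^ (k - 2) * aR ^ 2) ∧
      (((Finset.range k).filter (fun i => 0 < h^[i] y)).card = 1 →
        ∏ i ∈ Finset.range k, stmDeriv aL aR (h^[i] y) = aL ^ (k - 1) * aR) :=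
  derivative_product_over_cycle_general k hk aL aR h hord1 hord2 hord3 hord4 hord5 I hI0 hIi y i0 hy
    hne
end

section
/- Let k ≥ 2 and suppose a_L^{k−2} a_R² > 1 and a_L^{k−1} |a_R| > 1 with a_L > 0, a_R < 0. Let g : ℝ^n → ℝ^n be the piecewise-linear map g(y) = A_L y + e₁ (y₁ ≤ 0), A_R y + e₁ (y₁ ≥ 0) with companion matrices A_L, A_R as above. Then at any point y whose orbit avoids the switching hyperplanes, the Jacobian of g^{kn} is the diagonal matrix diag(∏_{i=0}^{k−1} h'(h^i(y₁)), ∏_{i=0}^{k−1} h'(h^i(y₂+1)), ..., ∏_{i=0}^{k−1} h'(h^i(yₙ+1))). -/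
theorem hasDerivAt_iterate {𝕜 : Type*} [NontriviallyNormedField 𝕜] {f f' : 𝕜 → 𝕜}
    {z : 𝕜} (k : ℕ) (hf : ∀ i < k, HasDerivAt f (f' (f^[i] z)) (f^[i] z)) :
    HasDerivAt f^[k] (∏ i ∈ Finset.range k, f' (f^[i] z)) z := by
  induction k with
  | zero => simpa using hasDerivAt_id z
  | succ k ih =>
    rw [Function.iterate_succ', Finset.prod_range_succ, mul_comm]
    exact (hf k k.lt_succ_self).comp z (ih fun i hi => hf i (hi.trans k.lt_succ_self))

theorem hasFDerivAt_pi_diagonal {𝕜 ι : Type*} [NontriviallyNormedField 𝕜] [CompleteSpace 𝕜]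
    [Fintype ι] [DecidableEq ι] {F : ι → 𝕜 → 𝕜} {d : ι → 𝕜} {y : ι → 𝕜}
    (hF : ∀ i, HasDerivAt (F i) (d i) (y i)) :
    HasFDerivAt (fun x i => F i (x i))
      (LinearMap.toContinuousLinearMap (Matrix.mulVecLin (Matrix.diagonal d))) y := by
  refine hasFDerivAt_pi'' fun i => ?_
  have hrow : (ContinuousLinearMap.proj i).comp
      (LinearMap.toContinuousLinearMap (Matrix.mulVecLin (Matrix.diagonal d)))
        = d i • ContinuousLinearMap.proj (R := 𝕜) (φ := fun _ : ι => 𝕜) i := by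
    ext v
    simp [Matrix.mulVec_diagonal]
  rw [hrow]
  exact (hF i).comp_hasFDerivAt y (hasFDerivAt_apply i y)

section FeedbackShift

variable {α : Type*} {n : ℕ} [NeZero n]

def feedbackShift (f : α → α) (u : Fin n → α) : Fin n → α :=
  fun i => if h : (i : ℕ) + 1 < n then u ⟨i + 1, h⟩ else f (u 0)

theorem feedbackShift_iterate_apply (f : α → α) (u : Fin n → α) (m : ℕ) (i : Fin n) :
    (feedbackShift f)^[m] u i
      = f^[(i + m) / n] (u ⟨(i + m) % n, Nat.mod_lt _ (NeZero.pos n)⟩) := by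
  induction m generalizing i with
  | zero => simp [Nat.div_eq_of_lt i.isLt, Nat.mod_eq_of_lt i.isLt]
  | succ m ih =>
    rw [Function.iterate_succ_apply', feedbackShift]
    split_ifs with h
    · rw [ih]
      simp only [add_assoc, add_comm 1 m]
    · have hi : (i : ℕ) + (m + 1) = m + n := by omega
      rw [ih, Fin.val_zero, zero_add, hi, Nat.add_div_right _ (NeZero.pos n),
        ← Function.iterate_succ_apply' f]
      simp only [Nat.add_mod_right]

theorem feedbackShift_iterate_mul (f : α → α) (u : Fin n → α) (k : ℕ) :
    (feedbackShift f)^[k * n] u = fun i => f^[k] (u i) := by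
  funext i
  rw [feedbackShift_iterate_apply, Nat.add_mul_div_right _ _ (NeZero.pos n),
    Nat.div_eq_of_lt i.isLt, zero_add]
  simp only [Nat.add_mul_mod_self_right, Nat.mod_eq_of_lt i.isLt]

theorem feedbackShift_iterate_apply_zero (f : α → α) (u : Fin n → α) (s : ℕ) (i : Fin n) :
    (feedbackShift f)^[s * n + i] u 0 = f^[s] (u i) := by
  rw [feedbackShift_iterate_apply, Fin.val_zero, zero_add, add_comm,
    Nat.add_mul_div_right _ _ (NeZero.pos n), Nat.div_eq_of_lt i.isLt, zero_add]
  simp only [Nat.add_mul_mod_self_right, Nat.mod_eq_of_lt i.isLt]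

end FeedbackShift

theorem compMat_mulVec_apply {n : ℕ} [NeZero n] (a : ℝ) (z : Fin n → ℝ) (i : Fin n) :
    (compMat n a).mulVec z i = if h : (i : ℕ) + 1 < n then z ⟨i + 1, h⟩ else a * z 0 := by
  split_ifs with h
  · have hrow : compMat n a i = Pi.single ⟨i + 1, h⟩ 1 := by
      funext j
      simp only [compMat, Pi.single_apply, Fin.ext_iff]
      by_cases hj : (i : ℕ) + 1 = j
      · rw [if_pos hj, if_pos hj.symm]
      · rw [if_neg hj, if_neg (Ne.symm hj), if_neg (by omega)]
    rw [Matrix.mulVec, hrow, single_one_dotProduct]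
  · have hrow : compMat n a i = Pi.single 0 a := by
      funext j
      simp only [compMat, Pi.single_apply, Fin.ext_iff, Fin.val_zero,
        show (i : ℕ) = n - 1 by omega, true_and]
      rw [if_neg (by omega)]
    rw [Matrix.mulVec, hrow, single_dotProduct]

def gmapOffset (n : ℕ) [NeZero n] : Fin n → ℝ := 1 - Pi.single 0 1

section Iterates

variable {n : ℕ} [NeZero n] (aL aR : ℝ) (y : Fin n → ℝ)

theorem gmap_semiconj :
    Function.Semiconj (· + gmapOffset n) (gmap n aL aR) (feedbackShift (stm aL aR)) := by
  intro y
  funext i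
  have hmat : (if y 0 ≤ 0 then compMat n aL else compMat n aR)
      = compMat n (if y 0 ≤ 0 then aL else aR) := by split_ifs <;> rfl
  have hstm : stm aL aR (y 0) = (if y 0 ≤ 0 then aL else aR) * y 0 + 1 := by
    unfold stm; split_ifs <;> rfl
  simp only [gmap, gmapOffset, feedbackShift, hmat, Pi.add_apply, Pi.sub_apply, Pi.one_apply,
    compMat_mulVec_apply]
  by_cases h : (i : ℕ) + 1 < n
  · have hne : (⟨i + 1, h⟩ : Fin n) ≠ 0 := Fin.ne_of_val_ne (Nat.succ_ne_zero i)
    rw [dif_pos h, dif_pos h, Pi.single_eq_of_ne hne]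
    ring
  · rw [dif_neg h, dif_neg h, Pi.single_eq_same, sub_self, add_zero, hstm]
    ring

theorem gmap_iterate_mul_apply (k : ℕ) (i : Fin n) :
    (gmap n aL aR)^[k * n] y i = (stm aL aR)^[k] (y i + gmapOffset n i) - gmapOffset n i := by
  have h := congrFun ((gmap_semiconj aL aR).iterate_right (k * n) y) i
  rw [feedbackShift_iterate_mul] at h
  exact eq_sub_of_add_eq h

theorem gmap_iterate_apply_zero (s : ℕ) (i : Fin n) :
    (gmap n aL aR)^[s * n + i] y 0 = (stm aL aR)^[s] (y i + gmapOffset n i) := by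
  have h := congrFun ((gmap_semiconj aL aR).iterate_right (s * n + i) y) 0
  rw [feedbackShift_iterate_apply_zero] at h
  simpa [gmapOffset] using h

end Iterates

theorem stm_hasDerivAt (aL aR : ℝ) {z : ℝ} (hz : z ≠ 0) :
    HasDerivAt (stm aL aR) (stmDeriv aL aR z) z := by
  have hlin : HasDerivAt (fun x => stmDeriv aL aR z * x + 1) (stmDeriv aL aR z) z := by
    simpa using ((hasDerivAt_id z).const_mul (stmDeriv aL aR z)).add_const 1
  refine hlin.congr_of_eventuallyEq ?_
  rcases hz.lt_or_gt with hneg | hpos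
  · filter_upwards [Iio_mem_nhds hneg] with x (hx : x < 0)
    simp [stm, stmDeriv, hx.le, hneg]
  · filter_upwards [Ioi_mem_nhds hpos] with x (hx : 0 < x)
    simp [stm, stmDeriv, hx.not_ge, hpos.not_gt]

theorem jacobian_of_iterate_general (n : ℕ) [NeZero n] (k : ℕ)
    (aL aR : ℝ)
    (y : Fin n → ℝ) (horb : ∀ j : ℕ, ((gmap n aL aR)^[j] y) 0 ≠ 0) :
    HasFDerivAt ((gmap n aL aR)^[k * n])
      (LinearMap.toContinuousLinearMap (Matrix.mulVecLin (Matrix.diagonal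
        (fun j : Fin n => if j = 0 then
            ∏ i ∈ Finset.range k, stmDeriv aL aR ((stm aL aR)^[i] (y 0))
          else ∏ i ∈ Finset.range k, stmDeriv aL aR ((stm aL aR)^[i] (y j + 1))))))
      y := by
  set c := gmapOffset n
  have hiter : (gmap n aL aR)^[k * n] = fun x j => (stm aL aR)^[k] (x j + c j) - c j :=
    funext fun x => funext (gmap_iterate_mul_apply aL aR x k)
  have hdiag : (fun j : Fin n => if j = 0 then
        ∏ i ∈ Finset.range k, stmDeriv aL aR ((stm aL aR)^[i] (y 0))
      else ∏ i ∈ Finset.range k, stmDeriv aL aR ((stm aL aR)^[i] (y j + 1)))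
      = fun j => ∏ i ∈ Finset.range k, stmDeriv aL aR ((stm aL aR)^[i] (y j + c j)) := by
    funext j
    by_cases hj : j = 0 <;> simp [c, gmapOffset, hj]
  rw [hiter, hdiag]
  refine hasFDerivAt_pi_diagonal (F := fun j z => (stm aL aR)^[k] (z + c j) - c j) fun j => ?_
  have hstep : ∀ s < k, HasDerivAt (stm aL aR) (stmDeriv aL aR ((stm aL aR)^[s] (y j + c j)))
      ((stm aL aR)^[s] (y j + c j)) := fun s _ =>
    stm_hasDerivAt aL aR (gmap_iterate_apply_zero aL aR y s j ▸ horb (s * n + j))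
  exact ((hasDerivAt_iterate k hstep).comp_add_const _ _).sub_const (c j)

/-- At a point whose orbit avoids the switching hyperplanes, the Jacobian of g^{kn}
is the diagonal matrix diag(∏_{i<k} h'(h^i(y₁)), ∏_{i<k} h'(h^i(y₂+1)), ...,
∏_{i<k} h'(h^i(yₙ+1))). -/
theorem jacobian_of_iterate (n : ℕ) [NeZero n] (hn : 2 ≤ n) (k : ℕ) (hk : 2 ≤ k)
    (aL aR : ℝ) (haL : 0 < aL) (haR : aR < 0)
    (hexp1 : 1 < aL ^ (k - 2) * aR ^ 2) (hexp2 : 1 < aL ^ (k - 1) * |aR|)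
    (y : Fin n → ℝ) (horb : ∀ j : ℕ, ((gmap n aL aR)^[j] y) 0 ≠ 0) :
    HasFDerivAt ((gmap n aL aR)^[k * n])
      (LinearMap.toContinuousLinearMap (Matrix.mulVecLin (Matrix.diagonal
        (fun j : Fin n => if j = 0 then
            ∏ i ∈ Finset.range k, stmDeriv aL aR ((stm aL aR)^[i] (y 0))
          else ∏ i ∈ Finset.range k, stmDeriv aL aR ((stm aL aR)^[i] (y j + 1))))))
      y :=
  jacobian_of_iterate_general n k aL aR y horb
end

section
/- Let ψ : (ZMod k)^n → (ZMod k)^n with ψ(v) = (v₂, ..., vₙ, v₁+1), and let j, q, r be nonnegative integers with jk = qn + r and 0 ≤ r < n. Then for all v, ψ^{jk}(v) = (v_{r+1}+q, v_{r+2}+q, ..., vₙ+q, v₁+q+1, v₂+q+1, ..., v_r+q+1). -/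
theorem Nat.add_one_div_eq_ite {n : ℕ} (hn : 0 < n) (a : ℕ) :
    (a + 1) / n = a / n + if a % n + 1 = n then 1 else 0 := by
  rw [Nat.succ_div]
  congr 1
  refine if_congr ?_ rfl rfl
  rw [Nat.dvd_iff_mod_eq_zero, ← Nat.mod_add_mod]
  have := Nat.mod_lt a hn
  constructor
  · intro h
    by_contra hne
    rw [Nat.mod_eq_of_lt (by omega)] at h
    omega
  · intro h
    rw [h, Nat.mod_self]

theorem Nat.add_div_eq_ite_of_lt {n a b : ℕ} (ha : a < n) (hb : b < n) :
    (a + b) / n = if n ≤ a + b then 1 else 0 := by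
  rw [Nat.add_div (by omega), Nat.div_eq_of_lt ha, Nat.div_eq_of_lt hb,
    Nat.mod_eq_of_lt ha, Nat.mod_eq_of_lt hb, zero_add, zero_add]

theorem psi_iterate_apply (k : ℕ) {n : ℕ} (hn : 0 < n) (t : ℕ) (v : Fin n → ZMod k)
    (m : Fin n) :
    (psi k n)^[t] v m = v ⟨(m + t) % n, Nat.mod_lt _ hn⟩ + (((m + t) / n : ℕ) : ZMod k) := by
  induction t generalizing v with
  | zero => simp [Nat.mod_eq_of_lt m.isLt, Nat.div_eq_of_lt m.isLt]
  | succ t ih =>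
    rw [Function.iterate_succ_apply, ih, psi, ← add_assoc, Nat.add_one_div_eq_ite hn]
    simp only [Nat.mod_add_mod]
    push_cast
    ring

theorem psi_iterate_jk_general (k n : ℕ) (hn : 0 < n)
    (j q r : ℕ) (hr : r < n) (hjk : j * k = q * n + r) :
    ∀ (v : Fin n → ZMod k) (m : Fin n),
      (psi k n)^[j * k] v m =
        v ⟨((m : ℕ) + r) % n, Nat.mod_lt _ hn⟩ + (q : ZMod k) +
          (if n ≤ (m : ℕ) + r then 1 else 0) := by
  intro v m
  have hshift : (m : ℕ) + j * k = (m + r) + q * n := by omega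
  rw [psi_iterate_apply k hn, hshift, Nat.add_mul_div_right _ _ hn,
    Nat.add_div_eq_ite_of_lt m.isLt hr]
  simp only [Nat.add_mul_mod_self_right]
  push_cast
  ring

/-- If jk = qn + r with 0 ≤ r < n, then
ψ^{jk}(v) = (v_{r+1}+q, ..., vₙ+q, v₁+q+1, ..., v_r+q+1). -/
theorem psi_iterate_jk (k n : ℕ) (hk : 0 < k) (hn : 0 < n)
    (j q r : ℕ) (hr : r < n) (hjk : j * k = q * n + r) :
    ∀ (v : Fin n → ZMod k) (m : Fin n),
      (psi k n)^[j * k] v m =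
        v ⟨((m : ℕ) + r) % n, Nat.mod_lt _ hn⟩ + (q : ZMod k) +
          (if n ≤ (m : ℕ) + r then 1 else 0) :=
  psi_iterate_jk_general k n hn j q r hr hjk
end
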